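/- arXiv:2404.07350 — 5 statements merged into one kernel-verified Lean document; each statement's English description precedes it below -/
import Mathlib

section
/- Let Γ be a countable group generated by elements (g_j)_{j∈ℕ}, and for notational convenience set g_{−j} = g_j^{−1} for j ∈ ℕ. Then Γ is sofic if and only if there exist permutation matrices (T_j^{(N)})_{j,N∈ℕ} with T_j^{(N)} ∈ M_N(ℂ), writing T_{−j}^{(N)} = (T_j^{(N)})^{−1}, such that for all m ∈ ℕ and all j(1), …, j(m) ∈ ℤ∖{0}: lim_{N→∞} tr_N(T_{j(1)}^{(N)} ⋯ T_{j(m)}^{(N)}) = δ_{g_{j(1)}⋯g_{j(m)} = e}. Furthermore, for the 'if' direction it suffices that such matrices T_j^{(N)} exist for N ranging over some subsequence N(k) → ∞ of natural numbers. -/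
open Filter MeasureTheory Matrix
open scoped BigOperators Classical

namespace GraphPaper

/-! ### Directed multigraphs (test digraphs) -/

/-- A directed multigraph with vertex type `V` and edge type `E`. -/
structure Digr (V E : Type*) where
  src : E → V
  tgt : E → V

namespace Digr

variable {V E : Type*} (D : Digr V E)

/-- One-step (direction-agnostic) adjacency. -/
def Adj (v w : V) : Prop := ∃ e : E, D.src e = v ∧ D.tgt e = w

/-- The setoid of weakly connected components. -/
def compSetoid : Setoid V := Relation.EqvGen.setoid D.Adj

/-- The weakly connected components. -/
def Components : Type _ := Quotient D.compSetoid

/-- The number of weakly connected components. -/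
noncomputable def ncomp : ℕ := Nat.card D.Components

/-- Weak connectedness. -/
def IsConnected : Prop := Nonempty V ∧ ∀ v w : V, D.compSetoid v w

/-- The digraph with one edge removed. -/
def erase (e₀ : E) : Digr V {e : E // e ≠ e₀} :=
  ⟨fun e => D.src e.1, fun e => D.tgt e.1⟩

/-- `e₀` is a cut edge: removing it increases the number of weakly connected components. -/
def IsCutEdge (e₀ : E) : Prop := D.ncomp < (D.erase e₀).ncomp

/-- Two-edge-connectedness: weakly connected with no cut edge. -/
def IsTwoEdgeConnected : Prop := D.IsConnected ∧ ∀ e : E, ¬ D.IsCutEdge e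

/-- A tree (as an undirected multigraph): connected, with no cycles and no parallel
edges; equivalently, connected and every edge is a cut edge. -/
def IsTree : Prop := D.IsConnected ∧ ∀ e : E, D.IsCutEdge e

/-- Two vertices are related iff they are joined by a path containing no cut edges;
the classes are the two-edge-connected components. -/
def tecSetoid : Setoid V :=
  Relation.EqvGen.setoid (fun v w => ∃ e : E, ¬ D.IsCutEdge e ∧ D.src e = v ∧ D.tgt e = w)

/-- The degree of a two-edge-connected component in the forest `ℱ(D)`:
the number of cut edges incident to it. -/
noncomputable def tecDeg (b : Quotient D.tecSetoid) : ℕ :=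
  Nat.card {e : E // D.IsCutEdge e ∧
    (Quotient.mk D.tecSetoid (D.src e) = b ∨ Quotient.mk D.tecSetoid (D.tgt e) = b)}

/-- `𝔣(D)`: the total number of leaves of the forest `ℱ(D)` of two-edge-connected
components, an isolated vertex counting as two leaves. -/
noncomputable def leafCount : ℕ :=
  ∑ᶠ b : Quotient D.tecSetoid,
    (if D.tecDeg b = 0 then 2 else if D.tecDeg b = 1 then 1 else 0)

/-- The quotient digraph by a partition (setoid) of the vertices. -/
def quotient (s : Setoid V) : Digr (Quotient s) E :=
  ⟨fun e => Quotient.mk s (D.src e), fun e => Quotient.mk s (D.tgt e)⟩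

/-- The subgraph retaining only the edges satisfying `p` (all vertices kept). -/
def restrict (p : E → Prop) : Digr V {e : E // p e} :=
  ⟨fun e => D.src e.1, fun e => D.tgt e.1⟩

/-- The trace of a test digraph with labels `A`. -/
noncomputable def tdTrace {ι : Type*} (A : E → Matrix ι ι ℂ) : ℂ :=
  (1 / (Nat.card ι : ℂ) ^ D.ncomp) *
    ∑ᶠ i : V → ι, ∏ᶠ e : E, A e (i (D.tgt e)) (i (D.src e))

/-- The injective trace of a test digraph with labels `A`. -/
noncomputable def tdTraceInj {ι : Type*} (A : E → Matrix ι ι ℂ) : ℂ :=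
  (1 / (Nat.card ι : ℂ) ^ D.ncomp) *
    ∑ᶠ i : V → ι,
      if Function.Injective i then ∏ᶠ e : E, A e (i (D.tgt e)) (i (D.src e)) else 0

end Digr

/-! ### Colored digraphs, partitions, and the associated auxiliary graphs -/

section Colored

variable {V E S C : Type*}

/-- `ρ_s` : the partition of `V` into weakly connected components of the subgraph of `D`
retaining only edges whose color is not related to the string `s`. -/
def rhoSetoid (D : Digr V E) (χ : E → C) (rel : S → C → Prop) (s : S) : Setoid V :=
  Relation.EqvGen.setoid (fun v w => ∃ e : E, ¬ rel s (χ e) ∧ D.src e = v ∧ D.tgt e = w)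

/-- `ω_{π,c} = ⋀_{s ∈ 𝒮_c} π_s`, the common refinement. -/
def omegaSetoid (rel : S → C → Prop) (π : S → Setoid V) (c : C) : Setoid V :=
  ⨅ s : {s : S // rel s c}, π s.1

/-- `T_{π,c} = (T|_c)/ω_{π,c}`. -/
def Tpc (D : Digr V E) (χ : E → C) (rel : S → C → Prop) (π : S → Setoid V) (c : C) :
    Digr (Quotient (omegaSetoid rel π c)) {e : E // χ e = c} :=
  (D.restrict (fun e => χ e = c)).quotient (omegaSetoid rel π c)

/-- `𝒢_{π,s} = (T|_{𝒞_s})/π_s`. -/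
def Gps (D : Digr V E) (χ : E → C) (rel : S → C → Prop) (π : S → Setoid V) (s : S) :
    Digr (Quotient (π s)) {e : E // rel s (χ e)} :=
  (D.restrict (fun e => rel s (χ e))).quotient (π s)

/-- The map `h_{s,c} : V(T_{π,c}) → V(𝒢_{π,s})`, `[v]_{ω_{π,c}} ↦ [v]_{π_s}`. -/
def hmap (rel : S → C → Prop) (π : S → Setoid V) {s : S} {c : C} (h : rel s c) :
    Quotient (omegaSetoid rel π c) → Quotient (π s) :=
  fun q => Quotient.liftOn q (fun v => Quotient.mk (π s) v)
    (fun a b hab => Quot.sound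
      (Setoid.le_def.mp (iInf_le (fun s' : {s' : S // rel s' c} => π s'.1) ⟨s, h⟩) hab))

/-- The vertex set of the graph of colored components `GCC(T,π,s)`. -/
def GCCVert (D : Digr V E) (χ : E → C) (rel : S → C → Prop) (π : S → Setoid V) (s : S) :
    Type _ :=
  Quotient (π s) ⊕ (Σ c : {c : C // rel s c}, (Tpc D χ rel π c.1).Components)

/-- The edge set of `GCC(T,π,s)`. -/
def GCCEdge (rel : S → C → Prop) (π : S → Setoid V) (s : S) : Type _ :=
  Σ c : {c : C // rel s c}, Quotient (omegaSetoid rel π c.1)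

/-- The graph of colored components `GCC(T,π,s)`: the bipartite multigraph with an edge
for each `v ∈ V(T_{π,c})` (`c ∈ 𝒞_s`), joining the component of `T_{π,c}` containing `v`
to `h_{s,c}(v)`. -/
def GCC (D : Digr V E) (χ : E → C) (rel : S → C → Prop) (π : S → Setoid V) (s : S) :
    Digr (GCCVert D χ rel π s) (GCCEdge rel π s) where
  src := fun p => Sum.inr ⟨p.1, Quotient.mk (Tpc D χ rel π p.1.1).compSetoid p.2⟩
  tgt := fun p => Sum.inl (hmap rel π p.1.2 p.2)

end Colored

/-! ### The matrix model -/

section Model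

variable {S C : Type*}

/-- Index set for `⊗_{s ∈ 𝒮} M_N(ℂ)`. -/
abbrev BigIx (S : Type*) (N : ℕ) := S → Fin N

/-- Index set for `⊗_{s ∈ 𝒮_c} M_N(ℂ)`. -/
abbrev ColIx (rel : S → C → Prop) (c : C) (N : ℕ) := {s : S // rel s c} → Fin N

/-- View a matrix in `⊗_{s ∈ 𝒮_c} M_N(ℂ)` inside `⊗_{s ∈ 𝒮} M_N(ℂ)` by tensoring with
the identity on the remaining factors. -/
noncomputable def embed [Fintype S] (rel : S → C → Prop) (c : C) {N : ℕ}
    (X : Matrix (ColIx rel c N) (ColIx rel c N) ℂ) :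
    Matrix (BigIx S N) (BigIx S N) ℂ :=
  Matrix.of fun a b =>
    if (∀ s : S, ¬ rel s c → a s = b s) then X (fun s => a s.1) (fun s => b s.1) else 0

/-- The permutation matrix of a permutation. -/
def permMat {ι : Type*} [DecidableEq ι] (σ : Equiv.Perm ι) : Matrix ι ι ℂ :=
  Matrix.of fun i j => if σ j = i then 1 else 0

/-- `X̲ = Σ_c^* X Σ_c`, viewed inside `⊗_{s ∈ 𝒮} M_N(ℂ)`. -/
noncomputable def conjEmbed [Fintype S] (rel : S → C → Prop) (c : C) {N : ℕ}
    (σc : Equiv.Perm (ColIx rel c N))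
    (X : Matrix (ColIx rel c N) (ColIx rel c N) ℂ) :
    Matrix (BigIx S N) (BigIx S N) ℂ :=
  embed rel c ((permMat σc)ᴴ * X * permMat σc)

/-- `Δ`, the conditional expectation onto the diagonal. -/
def diagPart {ι : Type*} [DecidableEq ι] (M : Matrix ι ι ℂ) : Matrix ι ι ℂ :=
  Matrix.diagonal fun i => M i i

/-- The normalized `L²`-norm `‖M‖₂ = tr_n(M^*M)^{1/2}`. -/
noncomputable def l2norm {ι : Type*} [Fintype ι] (M : Matrix ι ι ℂ) : ℝ :=
  Real.sqrt ((Matrix.trace (Mᴴ * M) / (Fintype.card ι : ℂ)).re)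

/-- The operator norm of a matrix acting on Euclidean space. -/
noncomputable def opNorm {ι : Type*} [Fintype ι] [DecidableEq ι] (M : Matrix ι ι ℂ) : ℝ :=
  ‖Matrix.toEuclideanCLM (𝕜 := ℂ) M‖

/-- The ordered product `f 0 * f 1 * ⋯ * f (k-1)`. -/
def prodList {M : Type*} [Monoid M] (k : ℕ) (f : Fin k → M) : M :=
  ((List.finRange k).map f).prod

/-- `γ_N(T,π)`. -/
noncomputable def gammaN {V E : Type*} [Fintype S] (rel : S → C → Prop)
    (D : Digr V E) (χ : E → C) (N : ℕ)
    (X : (e : E) → Matrix (ColIx rel (χ e) N) (ColIx rel (χ e) N) ℂ)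
    (Λ : V → Matrix (BigIx S N) (BigIx S N) ℂ)
    (π : S → Setoid V)
    (σ : (c : C) → Equiv.Perm (ColIx rel c N)) : ℂ :=
  (1 / (N : ℂ) ^ (Nat.card S)) *
    ∑ᶠ i : V → BigIx S N,
      if (∀ s : S, Setoid.ker (fun v => i v s) = π s) then
        (∏ᶠ v : V, Λ v (i v) (i v)) *
          ∏ᶠ e : E, (conjEmbed rel (χ e) (σ (χ e)) (X e)) (i (D.tgt e)) (i (D.src e))
      else 0

/-- `λ_N(T,π)`. -/
noncomputable def lambdaN {V : Type*} [Fintype S] (N : ℕ)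
    (Λ : V → Matrix (BigIx S N) (BigIx S N) ℂ) (π : S → Setoid V) : ℂ :=
  (1 / (N : ℂ) ^ (∑ᶠ s : S, Nat.card (Quotient (π s)))) *
    ∑ᶠ i : V → BigIx S N,
      if (∀ s : S, Setoid.ker (fun v => i v s) = π s) then (∏ᶠ v : V, Λ v (i v) (i v))
      else 0

/-- `τ_{N^{#𝒮}}(T̊)`, the trace of the test digraph `T` with a `Λ_v`-labelled self-loop
added at each vertex `v`. -/
noncomputable def ringTrace {V E : Type*} [Fintype S] (rel : S → C → Prop)
    (D : Digr V E) (χ : E → C) (N : ℕ)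
    (X : (e : E) → Matrix (ColIx rel (χ e) N) (ColIx rel (χ e) N) ℂ)
    (Λ : V → Matrix (BigIx S N) (BigIx S N) ℂ)
    (σ : (c : C) → Equiv.Perm (ColIx rel c N)) : ℂ :=
  (1 / (N : ℂ) ^ (Nat.card S)) *
    ∑ᶠ i : V → BigIx S N,
      (∏ᶠ v : V, Λ v (i v) (i v)) *
        ∏ᶠ e : E, (conjEmbed rel (χ e) (σ (χ e)) (X e)) (i (D.tgt e)) (i (D.src e))

/-- Expectation with respect to independent uniformly random permutations, one for each
color: the average over all tuples of permutations. -/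
noncomputable def Eperm [Fintype S] (rel : S → C → Prop) (N : ℕ)
    (f : ((c : C) → Equiv.Perm (ColIx rel c N)) → ℂ) : ℂ :=
  (∑ᶠ σ : (c : C) → Equiv.Perm (ColIx rel c N), f σ) /
    (Nat.card ((c : C) → Equiv.Perm (ColIx rel c N)) : ℂ)

/-- Transport a matrix label along an equality of colors. -/
def castCol (rel : S → C → Prop) {N : ℕ} {c c' : C} (h : c = c')
    (X : Matrix (ColIx rel c N) (ColIx rel c N) ℂ) :
    Matrix (ColIx rel c' N) (ColIx rel c' N) ℂ := h ▸ X

/-- The uniform probability measure on the tuples of permutations (with the discrete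
`σ`-algebra). -/
noncomputable def uniformTupleMeasure [Fintype C] [Fintype S] (rel : S → C → Prop) (N : ℕ) :=
  letI : MeasurableSpace ((c : C) → Equiv.Perm (ColIx rel c N)) := ⊤
  haveI : Nonempty ((c : C) → Equiv.Perm (ColIx rel c N)) := ⟨fun _ => 1⟩
  ((PMF.uniformOfFintype ((c : C) → Equiv.Perm (ColIx rel c N))).toMeasure :
    Measure ((c : C) → Equiv.Perm (ColIx rel c N)))

/-- The tuple `(Σ_c)_{c ∈ 𝒞}` of random permutations is uniformly distributed on the
product (equivalently, the `Σ_c` are independent and each uniform). -/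
def hasUniformLaw [Fintype C] [Fintype S] (rel : S → C → Prop) {Ω : Type*}
    [MeasurableSpace Ω] (P : Measure Ω) (N : ℕ)
    (Sp : (c : C) → Ω → Equiv.Perm (ColIx rel c N)) : Prop :=
  letI : MeasurableSpace ((c : C) → Equiv.Perm (ColIx rel c N)) := ⊤
  Measure.map (fun ω c => Sp c ω) P = uniformTupleMeasure rel N

end Model

/-- A word `χ : [k] → 𝒞` is `𝒢`-reduced. -/
def GReduced {C : Type*} (Edg : C → C → Prop) {k : ℕ} (χ : Fin k → C) : Prop :=
  ∀ i j : Fin k, i < j → χ i = χ j → ∃ l : Fin k, i < l ∧ l < j ∧ ¬ Edg (χ i) (χ l)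

/-! ### Sofic groups and graph products of groups -/

/-- The normalized Hamming distance on `S_N`. -/
noncomputable def dHamm {n : ℕ} (σ τ : Equiv.Perm (Fin n)) : ℝ :=
  ((Finset.univ.filter fun j : Fin n => σ j ≠ τ j).card : ℝ) / n

/-- A group is sofic if it admits an asymptotic homomorphism into permutation groups. -/
def IsSofic (Γ : Type*) [Group Γ] : Prop :=
  ∃ (Nk : ℕ → ℕ) (σ : (k : ℕ) → Γ → Equiv.Perm (Fin (Nk k))),
    Tendsto Nk atTop atTop ∧
    (∀ g h : Γ, Tendsto (fun k => dHamm (σ k g * σ k h) (σ k (g * h))) atTop (nhds 0)) ∧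
    (∀ g : Γ, Tendsto (fun k => dHamm (σ k g) 1) atTop
      (nhds (if g = 1 then 0 else 1)))

/-- The normal subgroup of the free product generated by the commutators of elements of
vertex groups joined by an edge. -/
def graphProductKer {C : Type*} (Edg : C → C → Prop) (G : C → Type*)
    [∀ c, Group (G c)] : Subgroup (Monoid.CoprodI G) :=
  Subgroup.normalClosure
    {x | ∃ (c c' : C) (_ : Edg c c') (g : G c) (g' : G c'),
      x = Monoid.CoprodI.of g * Monoid.CoprodI.of g' *
        (Monoid.CoprodI.of g)⁻¹ * (Monoid.CoprodI.of g')⁻¹}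

/-- The graph product of the groups `(G c)_{c ∈ 𝒞}` over the graph with edge relation
`Edg`. -/
def GraphProduct {C : Type*} (Edg : C → C → Prop) (G : C → Type*) [∀ c, Group (G c)] :
    Type _ :=
  Monoid.CoprodI G ⧸ graphProductKer Edg G

instance graphProductKer_normal {C : Type*} (Edg : C → C → Prop) (G : C → Type*)
    [∀ c, Group (G c)] : (graphProductKer Edg G).Normal :=
  Subgroup.normalClosure_normal

instance {C : Type*} (Edg : C → C → Prop) (G : C → Type*) [∀ c, Group (G c)] :
    Group (GraphProduct Edg G) :=
  QuotientGroup.Quotient.group _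

/-- The group element corresponding to a word in the generators and their inverses:
the letter `(j, tt)` is `g_j`, and `(j, ff)` is `g_j⁻¹`. -/
def wordElemG {Γ : Type*} [Group Γ] (g : ℕ → Γ) {m : ℕ} (w : Fin m → ℕ × Bool) : Γ :=
  prodList m (fun i => if (w i).2 then g (w i).1 else (g (w i).1)⁻¹)

/-- The matrix product corresponding to a word in permutation matrices and their
inverses. -/
noncomputable def wordMat {N m : ℕ} (T : ℕ → Equiv.Perm (Fin N)) (w : Fin m → ℕ × Bool) :
    Matrix (Fin N) (Fin N) ℂ :=
  prodList m (fun i => if (w i).2 then permMat (T (w i).1) else (permMat (T (w i).1))⁻¹)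


/-!
A word in the generators is an element `x` of the free group `F` on `ℕ`, and the normalized
trace of a permutation matrix is one minus the Hamming distance of the permutation from the
identity. Both sides of the equivalence therefore say that homomorphisms `ψ_N : F → S_N` detect,
in the Hamming limit, whether `x` lies in the kernel of `F → Γ`. A sofic approximation `σ_k`
yields such homomorphisms by extending `σ_k ∘ g`, since asymptotic multiplicativity propagates
along words. Conversely, composing such homomorphisms with a set-theoretic section `s` of
`F → Γ` is a sofic approximation: the defect of `σ a * σ b` against `σ (a * b)` is measured by
`s (a * b)⁻¹ * s a * s b`, an element of the kernel. To pass from a sequence of sizes to every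
size `N`, a permutation of size `M ≪ N` is repeated in `N / M` blocks, which moves its Hamming
distance from the identity by at most `M / N`.
-/

open Equiv Topology

section Hamming

variable {n : ℕ}

lemma dHamm_nonneg (σ τ : Perm (Fin n)) : 0 ≤ dHamm σ τ := by
  unfold dHamm; positivity

@[simp] lemma dHamm_self (σ : Perm (Fin n)) : dHamm σ σ = 0 := by
  simp [dHamm]

lemma dHamm_comm (σ τ : Perm (Fin n)) : dHamm σ τ = dHamm τ σ := by
  simp only [dHamm, ne_comm]

lemma dHamm_mul_left (ρ σ τ : Perm (Fin n)) : dHamm (ρ * σ) (ρ * τ) = dHamm σ τ := by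
  simp [dHamm]

lemma dHamm_mul_right (σ τ ρ : Perm (Fin n)) : dHamm (σ * ρ) (τ * ρ) = dHamm σ τ := by
  unfold dHamm
  congr 2
  exact Finset.card_equiv ρ fun _ => by rw [Finset.mem_filter, Finset.mem_filter]; simp

lemma dHamm_eq_dHamm_inv_mul (σ τ : Perm (Fin n)) : dHamm σ τ = dHamm (τ⁻¹ * σ) 1 := by
  rw [← dHamm_mul_left τ⁻¹ σ τ, inv_mul_cancel]

lemma dHamm_inv_inv (σ τ : Perm (Fin n)) : dHamm σ⁻¹ τ⁻¹ = dHamm σ τ := by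
  rw [← dHamm_mul_left τ, ← dHamm_mul_right _ _ σ]
  simp [dHamm_comm]

lemma dHamm_triangle (σ ρ τ : Perm (Fin n)) : dHamm σ τ ≤ dHamm σ ρ + dHamm ρ τ := by
  unfold dHamm
  rw [← add_div]
  gcongr
  exact_mod_cast (Finset.card_le_card fun j hj => by
    simp only [Finset.mem_filter, Finset.mem_union, Finset.mem_univ, true_and] at hj ⊢
    by_contra! h
    exact hj (h.1.trans h.2)).trans (Finset.card_union_le _ _)

lemma abs_dHamm_sub_dHamm_le (σ τ ρ : Perm (Fin n)) :
    |dHamm σ ρ - dHamm τ ρ| ≤ dHamm σ τ := by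
  rw [abs_sub_le_iff]
  constructor
  · linarith [dHamm_triangle σ τ ρ]
  · linarith [dHamm_triangle τ σ ρ, dHamm_comm σ τ]

lemma dHamm_one (σ : Perm (Fin n)) : dHamm σ 1 = (σ.support.card : ℝ) / n := rfl

end Hamming

section PermMat

variable {ι : Type*} [Fintype ι] [DecidableEq ι]

lemma permMat_eq_permMatrixHom (σ : Perm ι) : permMat σ = Matrix.permMatrixHom σ := by
  ext i j
  simp only [permMat, Matrix.permMatrixHom_apply, Matrix.of_apply, PEquiv.toMatrix_apply,
    toPEquiv_apply, Option.mem_def, Option.some.injEq, Perm.inv_def]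
  exact if_congr (by rw [Equiv.symm_apply_eq, eq_comm]) rfl rfl

lemma inv_permMat (σ : Perm ι) : (permMat σ)⁻¹ = permMat σ⁻¹ :=
  Matrix.inv_eq_right_inv <| by
    rw [permMat_eq_permMatrixHom, permMat_eq_permMatrixHom, ← map_mul, mul_inv_cancel, map_one]

lemma trace_permMat_div {n : ℕ} (hn : 0 < n) (σ : Perm (Fin n)) :
    Matrix.trace (permMat σ) / n = ((1 - dHamm σ 1 : ℝ) : ℂ) := by
  have hfix : Matrix.trace (permMat σ) = (Finset.univ.filter fun j => σ j = j).card := by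
    rw [Finset.card_filter]
    simp [Matrix.trace, permMat]
  have hcard : ((Finset.univ.filter fun j => σ j = j).card : ℂ) + σ.support.card = n := by
    have := Finset.card_filter_add_card_filter_not (s := Finset.univ) fun j => σ j = j
    rw [Finset.card_univ, Fintype.card_fin] at this
    exact_mod_cast this
  have hn' : (n : ℂ) ≠ 0 := by exact_mod_cast hn.ne'
  rw [hfix, dHamm_one]
  push_cast
  field_simp
  linear_combination hcard

end PermMat

lemma map_prodList {M N : Type*} [Monoid M] [Monoid N] (φ : M →* N) (k : ℕ) (f : Fin k → M) :
    φ (prodList k f) = prodList k (fun i => φ (f i)) := by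
  simp [prodList, map_list_prod, List.map_map, Function.comp_def]

lemma wordMat_eq_permMat {N m : ℕ} (T : ℕ → Perm (Fin N)) (w : Fin m → ℕ × Bool) :
    wordMat T w = permMat (wordElemG T w) := by
  rw [wordMat, wordElemG, permMat_eq_permMatrixHom (prodList _ _), map_prodList]
  congr 1
  funext i
  split_ifs
  · rw [permMat_eq_permMatrixHom]
  · rw [inv_permMat, permMat_eq_permMatrixHom]

lemma wordElemG_eq_lift_mk {Γ : Type*} [Group Γ] (g : ℕ → Γ) {m : ℕ} (w : Fin m → ℕ × Bool) :
    wordElemG g w = FreeGroup.lift g (FreeGroup.mk (List.ofFn w)) := by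
  simp [wordElemG, prodList, FreeGroup.lift_mk, List.ofFn_eq_map, List.map_map, Function.comp_def,
    cond_eq_ite]

lemma _root_.FreeGroup.exists_mk_ofFn_eq {α : Type*} (x : FreeGroup α) :
    ∃ (m : ℕ) (w : Fin m → α × Bool), FreeGroup.mk (List.ofFn w) = x :=
  ⟨_, x.toWord.get, by rw [List.ofFn_get, FreeGroup.mk_toWord]⟩

section AsymptoticHom

variable {Γ : Type*} [Group Γ] {Nk : ℕ → ℕ} {σ : (k : ℕ) → Γ → Perm (Fin (Nk k))}

lemma tendsto_dHamm_inv_map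
    (hmul : ∀ a b, Tendsto (fun k => dHamm (σ k a * σ k b) (σ k (a * b))) atTop (𝓝 0))
    (hone : Tendsto (fun k => dHamm (σ k 1) 1) atTop (𝓝 0)) (a : Γ) :
    Tendsto (fun k => dHamm (σ k a)⁻¹ (σ k a⁻¹)) atTop (𝓝 0) := by
  have hle : ∀ k, dHamm (σ k a)⁻¹ (σ k a⁻¹)
      ≤ dHamm (σ k 1) 1 + dHamm (σ k a * σ k a⁻¹) (σ k (a * a⁻¹)) := fun k =>
    calc dHamm (σ k a)⁻¹ (σ k a⁻¹) = dHamm 1 (σ k a * σ k a⁻¹) := by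
          rw [← dHamm_mul_left (σ k a), mul_inv_cancel]
      _ ≤ dHamm 1 (σ k 1) + dHamm (σ k 1) (σ k a * σ k a⁻¹) := dHamm_triangle _ _ _
      _ = _ := by rw [mul_inv_cancel a, dHamm_comm 1 (σ k 1), dHamm_comm (σ k 1) (σ k a * _)]
  simpa using squeeze_zero (fun k => dHamm_nonneg _ _) hle (by simpa using hone.add (hmul a a⁻¹))

lemma tendsto_dHamm_lift {α : Type*} (g : α → Γ)
    (hmul : ∀ a b, Tendsto (fun k => dHamm (σ k a * σ k b) (σ k (a * b))) atTop (𝓝 0))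
    (hone : Tendsto (fun k => dHamm (σ k 1) 1) atTop (𝓝 0)) (x : FreeGroup α) :
    Tendsto (fun k => dHamm (FreeGroup.lift (fun a => σ k (g a)) x) (σ k (FreeGroup.lift g x)))
      atTop (𝓝 0) := by
  have hx : x ∈ Subgroup.closure (Set.range FreeGroup.of) := by
    rw [FreeGroup.closure_range_of]; trivial
  induction hx using Subgroup.closure_induction with
  | mem _ h =>
    obtain ⟨a, rfl⟩ := h
    simp
  | one => simpa [dHamm_comm] using hone
  | mul x y _ _ hx hy =>
    refine squeeze_zero (fun k => dHamm_nonneg _ _) (fun k => ?_)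
      (by simpa using (hx.add hy).add (hmul (FreeGroup.lift g x) (FreeGroup.lift g y)))
    set ψ := FreeGroup.lift (fun a => σ k (g a))
    set φ := FreeGroup.lift g
    calc dHamm (ψ (x * y)) (σ k (φ (x * y)))
        ≤ dHamm (ψ x * ψ y) (ψ x * σ k (φ y)) + dHamm (ψ x * σ k (φ y)) (σ k (φ x) * σ k (φ y))
          + dHamm (σ k (φ x) * σ k (φ y)) (σ k (φ x * φ y)) := by
          rw [map_mul, map_mul]
          linarith [dHamm_triangle (ψ x * ψ y) (ψ x * σ k (φ y)) (σ k (φ x * φ y)),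
            dHamm_triangle (ψ x * σ k (φ y)) (σ k (φ x) * σ k (φ y)) (σ k (φ x * φ y))]
      _ = dHamm (ψ x) (σ k (φ x)) + dHamm (ψ y) (σ k (φ y))
          + dHamm (σ k (φ x) * σ k (φ y)) (σ k (φ x * φ y)) := by
          rw [dHamm_mul_left, dHamm_mul_right, add_comm (dHamm (ψ y) _)]
  | inv x _ hx =>
    refine squeeze_zero (fun k => dHamm_nonneg _ _) (fun k => ?_)
      (by simpa using hx.add (tendsto_dHamm_inv_map hmul hone (FreeGroup.lift g x)))
    set ψ := FreeGroup.lift (fun a => σ k (g a))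
    set φ := FreeGroup.lift g
    calc dHamm (ψ x⁻¹) (σ k (φ x⁻¹))
        ≤ dHamm (ψ x)⁻¹ (σ k (φ x))⁻¹ + dHamm (σ k (φ x))⁻¹ (σ k (φ x)⁻¹) := by
          rw [map_inv, map_inv]
          exact dHamm_triangle _ _ _
      _ = _ := by rw [dHamm_inv_inv]

end AsymptoticHom

theorem IsSofic.exists_freeGroup_homs {Γ : Type*} [Group Γ] (hs : IsSofic Γ) {α : Type*}
    (g : α → Γ) :
    ∃ (Nk : ℕ → ℕ) (ψ : (k : ℕ) → FreeGroup α →* Perm (Fin (Nk k))), ∀ x,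
      Tendsto (fun k => dHamm (ψ k x) 1) atTop (𝓝 (if FreeGroup.lift g x = 1 then 0 else 1)) := by
  obtain ⟨Nk, σ, -, hmul, hdist⟩ := hs
  have hone : Tendsto (fun k => dHamm (σ k 1) 1) atTop (𝓝 0) := by simpa using hdist 1
  refine ⟨Nk, fun k => FreeGroup.lift fun a => σ k (g a), fun x => ?_⟩
  have hclose := tendsto_dHamm_lift g hmul hone x
  refine (hdist (FreeGroup.lift g x)).congr_dist <|
    squeeze_zero (fun _ => dist_nonneg) (fun k => ?_) hclose
  rw [Real.dist_eq]
  exact (abs_dHamm_sub_dHamm_le _ _ _).trans_eq (dHamm_comm _ _)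

theorem isSofic_of_surjective {F Γ : Type*} [Group F] [Group Γ] (φ : F →* Γ)
    (hφ : Function.Surjective φ) {Nk : ℕ → ℕ} (hNk : Tendsto Nk atTop atTop)
    (ψ : (k : ℕ) → F →* Perm (Fin (Nk k)))
    (hψ : ∀ x, Tendsto (fun k => dHamm (ψ k x) 1) atTop (𝓝 (if φ x = 1 then 0 else 1))) :
    IsSofic Γ := by
  let s := Function.surjInv hφ
  have hs : ∀ a, φ (s a) = a := Function.surjInv_eq hφ
  refine ⟨Nk, fun k a => ψ k (s a), hNk, fun a b => ?_, fun a => by simpa [hs] using hψ (s a)⟩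
  have hker : φ ((s (a * b))⁻¹ * (s a * s b)) = 1 := by simp [hs]
  have := hψ ((s (a * b))⁻¹ * (s a * s b))
  rw [hker, if_pos rfl] at this
  refine this.congr fun k => ?_
  rw [map_mul, map_mul, map_inv]
  exact (dHamm_eq_dHamm_inv_mul _ _).symm

section Amplification

variable (M N : ℕ)

def blockEquiv : (Fin (N / M) × Fin M) ⊕ Fin (N % M) ≃ Fin N :=
  ((Equiv.sumCongr finProdFinEquiv (Equiv.refl _)).trans finSumFinEquiv).trans
    (finCongr (by rw [mul_comm, Nat.div_add_mod]))

def blockHom : Perm (Fin M) →* Perm (Fin N) where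
  toFun σ := (blockEquiv M N).permCongr (((Equiv.refl _).prodCongr σ).sumCongr (Equiv.refl _))
  map_one' := by ext; simp
  map_mul' _ _ := by ext; simp [permCongr_apply]; rfl

variable {M N}

lemma card_support_blockHom (σ : Perm (Fin M)) :
    (blockHom M N σ).support.card = N / M * σ.support.card := by
  simp only [Perm.support, Finset.card_filter]
  rw [← Equiv.sum_comp (blockEquiv M N)]
  simp [blockHom, permCongr_apply, Fintype.sum_sum_type, Fintype.sum_prod_type]

lemma abs_dHamm_blockHom_sub_le (hN : 0 < N) (σ : Perm (Fin M)) :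
    |dHamm (blockHom M N σ) 1 - dHamm σ 1| ≤ M / N := by
  have hsupp : σ.support.card ≤ M := by simpa using σ.support.card_le_univ
  rcases Nat.eq_zero_or_pos M with rfl | hM
  · simp_all
  rw [dHamm_one, dHamm_one, card_support_blockHom, Nat.cast_mul]
  have hdiv : ((N / M : ℕ) : ℝ) * M + (N % M : ℕ) = N := by exact_mod_cast Nat.div_add_mod' N M
  have hr : ((N % M : ℕ) : ℝ) ≤ M := by exact_mod_cast (Nat.mod_lt N hM).le
  have ha : (σ.support.card : ℝ) ≤ M := by exact_mod_cast hsupp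
  set a : ℝ := (σ.support.card : ℝ)
  set r : ℝ := ((N % M : ℕ) : ℝ)
  have hN : (0 : ℝ) < N := by exact_mod_cast hN
  have hM : (0 : ℝ) < M := by exact_mod_cast hM
  have key : ((N / M : ℕ) : ℝ) * a / N - a / M = -(a * r) / (N * M) := by
    field_simp
    linear_combination a * hdiv
  rw [key, abs_div, abs_neg, abs_of_nonneg (by positivity), abs_of_pos (by positivity),
    div_le_div_iff₀ (by positivity) hN]
  nlinarith [mul_le_mul ha hr (by positivity) hM.le]

end Amplification

lemma exists_tendsto_atTop_and_div_tendsto_zero (M : ℕ → ℕ) :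
    ∃ k : ℕ → ℕ, Tendsto k atTop atTop ∧ Tendsto (fun N => (M (k N) : ℝ) / N) atTop (𝓝 0) := by
  let k N := Nat.findGreatest (fun k => (k + 1) * M k ≤ N) N
  have hk : Tendsto k atTop atTop := tendsto_atTop.2 fun K => by
    filter_upwards [eventually_ge_atTop (max K ((K + 1) * M K))] with N hN
    exact Nat.le_findGreatest (le_of_max_le_left hN) (le_of_max_le_right hN)
  refine ⟨k, hk, squeeze_zero' (.of_forall fun _ => by positivity) ?_
    (tendsto_one_div_add_atTop_nhds_zero_nat.comp hk)⟩
  filter_upwards [eventually_ge_atTop (max 1 (M 0))] with N hN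
  have hspec : (k N + 1) * M (k N) ≤ N :=
    Nat.findGreatest_spec (P := fun k => (k + 1) * M k ≤ N) (m := 0) (Nat.zero_le _)
      (by simpa using le_of_max_le_right hN)
  have hN : (0 : ℝ) < N := by exact_mod_cast le_of_max_le_left hN
  rw [Function.comp_apply, div_le_div_iff₀ hN (by positivity)]
  exact_mod_cast (by linarith : M (k N) * (k N + 1) ≤ 1 * N)

theorem exists_homs_fin_of_tendsto {F : Type*} [Group F] {Nk : ℕ → ℕ}
    (ψ : (k : ℕ) → F →* Perm (Fin (Nk k))) {L : F → ℝ}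
    (hψ : ∀ x, Tendsto (fun k => dHamm (ψ k x) 1) atTop (𝓝 (L x))) :
    ∃ ψ' : (N : ℕ) → F →* Perm (Fin N), ∀ x,
      Tendsto (fun N => dHamm (ψ' N x) 1) atTop (𝓝 (L x)) := by
  obtain ⟨k, hk, hsmall⟩ := exists_tendsto_atTop_and_div_tendsto_zero Nk
  refine ⟨fun N => (blockHom (Nk (k N)) N).comp (ψ (k N)), fun x => ?_⟩
  refine ((hψ x).comp hk).congr_dist <|
    squeeze_zero' (.of_forall fun _ => dist_nonneg) ?_ hsmall
  filter_upwards [eventually_gt_atTop 0] with N hN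
  rw [dist_comm, Real.dist_eq]
  exact abs_dHamm_blockHom_sub_le hN _

lemma tendsto_trace_permMat_div_iff {Nk : ℕ → ℕ} (hNk : ∀ᶠ p in atTop, 0 < Nk p)
    (τ : (p : ℕ) → Perm (Fin (Nk p))) (b : Prop) [Decidable b] :
    Tendsto (fun p => Matrix.trace (permMat (τ p)) / (Nk p : ℂ)) atTop
        (𝓝 (if b then 1 else 0)) ↔
      Tendsto (fun p => dHamm (τ p) 1) atTop (𝓝 (if b then 0 else 1)) := by
  have hlim : (if b then 1 else 0 : ℂ) = ((1 - if b then 0 else 1 : ℝ) : ℂ) := by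
    split_ifs <;> norm_num
  rw [hlim, tendsto_congr' (hNk.mono fun p hp => trace_permMat_div hp (τ p)),
    Filter.tendsto_ofReal_iff]
  exact ⟨fun h => by simpa using (tendsto_const_nhds (x := (1 : ℝ))).sub h, tendsto_const_nhds.sub⟩

lemma tendsto_trace_wordMat_iff {Γ : Type*} [Group Γ] (g : ℕ → Γ) {Nk : ℕ → ℕ}
    (hNk : ∀ᶠ p in atTop, 0 < Nk p) (T : ℕ → (p : ℕ) → Perm (Fin (Nk p))) :
    (∀ (m : ℕ) (w : Fin m → ℕ × Bool),
      Tendsto (fun p => Matrix.trace (wordMat (fun j => T j p) w) / (Nk p : ℂ))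
        atTop (𝓝 (if wordElemG g w = 1 then 1 else 0))) ↔
    ∀ x : FreeGroup ℕ, Tendsto (fun p => dHamm (FreeGroup.lift (fun j => T j p) x) 1) atTop
      (𝓝 (if FreeGroup.lift g x = 1 then 0 else 1)) := by
  simp only [wordMat_eq_permMat, wordElemG_eq_lift_mk, tendsto_trace_permMat_div_iff hNk]
  refine ⟨fun h x => ?_, fun h m w => h _⟩
  obtain ⟨m, w, rfl⟩ := x.exists_mk_ofFn_eq
  exact h m w

theorem isSofic_of_tendsto_trace_wordMat {Γ : Type*} [Group Γ] {g : ℕ → Γ}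
    (hgen : Subgroup.closure (Set.range g) = ⊤) {Nk : ℕ → ℕ} (hNk : Tendsto Nk atTop atTop)
    (T : ℕ → (p : ℕ) → Perm (Fin (Nk p)))
    (hT : ∀ (m : ℕ) (w : Fin m → ℕ × Bool),
      Tendsto (fun p => Matrix.trace (wordMat (fun j => T j p) w) / (Nk p : ℂ))
        atTop (𝓝 (if wordElemG g w = 1 then 1 else 0))) :
    IsSofic Γ :=
  isSofic_of_surjective (FreeGroup.lift g)
    (FreeGroup.lift_surjective_iff_closure_range_eq_top.mpr hgen) hNk _
    ((tendsto_trace_wordMat_iff g (hNk.eventually_gt_atTop 0) T).mp hT)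

theorem IsSofic.exists_tendsto_trace_wordMat {Γ : Type*} [Group Γ] (hs : IsSofic Γ)
    (g : ℕ → Γ) :
    ∃ T : ℕ → (N : ℕ) → Perm (Fin N), ∀ (m : ℕ) (w : Fin m → ℕ × Bool),
      Tendsto (fun N : ℕ => Matrix.trace (wordMat (fun j => T j N) w) / (N : ℂ))
        atTop (𝓝 (if wordElemG g w = 1 then 1 else 0)) := by
  obtain ⟨Nk, ψ, hψ⟩ := hs.exists_freeGroup_homs g
  obtain ⟨ψ', hψ'⟩ := exists_homs_fin_of_tendsto ψ hψ
  refine ⟨fun j N => ψ' N (FreeGroup.of j),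
    (tendsto_trace_wordMat_iff g (eventually_gt_atTop 0) _).mpr fun x => ?_⟩
  have hlift : ∀ N, FreeGroup.lift (fun j => ψ' N (FreeGroup.of j)) = ψ' N := fun N =>
    FreeGroup.ext_hom _ _ fun _ => FreeGroup.lift_apply_of
  simpa only [hlift] using hψ' x

theorem statement3_general {Γ : Type} [Group Γ]
    (g : ℕ → Γ) (hgen : Subgroup.closure (Set.range g) = ⊤) :
    (IsSofic Γ ↔
      ∃ T : ℕ → (N : ℕ) → Equiv.Perm (Fin N),
        ∀ (m : ℕ) (w : Fin m → ℕ × Bool),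
          Tendsto (fun N : ℕ => Matrix.trace (wordMat (fun j => T j N) w) / (N : ℂ))
            atTop (nhds (if wordElemG g w = 1 then 1 else 0)))
    ∧ ((∃ Nk : ℕ → ℕ, Tendsto Nk atTop atTop ∧
        ∃ T : ℕ → (p : ℕ) → Equiv.Perm (Fin (Nk p)),
          ∀ (m : ℕ) (w : Fin m → ℕ × Bool),
            Tendsto (fun p : ℕ => Matrix.trace (wordMat (fun j => T j p) w) / (Nk p : ℂ))
              atTop (nhds (if wordElemG g w = 1 then 1 else 0))) → IsSofic Γ) :=
  ⟨⟨fun hs => hs.exists_tendsto_trace_wordMat g,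
      fun ⟨T, hT⟩ => isSofic_of_tendsto_trace_wordMat hgen tendsto_id T hT⟩,
    fun ⟨_, hNk, T, hT⟩ => isSofic_of_tendsto_trace_wordMat hgen hNk T hT⟩

/-- **Proposition (matrix characterization of soficity).** A word in the generators is
encoded as `w : Fin m → ℕ × Bool`, the letter `(j, true)` standing for `g_j` and
`(j, false)` for `g_j⁻¹ = g_{-j}`. -/
theorem statement3 {Γ : Type} [Group Γ] [Countable Γ]
    (g : ℕ → Γ) (hgen : Subgroup.closure (Set.range g) = ⊤) :
    (IsSofic Γ ↔
      ∃ T : ℕ → (N : ℕ) → Equiv.Perm (Fin N),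
        ∀ (m : ℕ) (w : Fin m → ℕ × Bool),
          Tendsto (fun N : ℕ => Matrix.trace (wordMat (fun j => T j N) w) / (N : ℂ))
            atTop (nhds (if wordElemG g w = 1 then 1 else 0)))
    ∧ ((∃ Nk : ℕ → ℕ, Tendsto Nk atTop atTop ∧
        ∃ T : ℕ → (p : ℕ) → Equiv.Perm (Fin (Nk p)),
          ∀ (m : ℕ) (w : Fin m → ℕ × Bool),
            Tendsto (fun p : ℕ => Matrix.trace (wordMat (fun j => T j p) w) / (Nk p : ℂ))
              atTop (nhds (if wordElemG g w = 1 then 1 else 0))) → IsSofic Γ) :=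
  statement3_general g hgen

end GraphPaper
end

section
/- Let Z_1, …, Z_k ∈ M_N(ℂ). Let T be the test digraph which is a directed k-cycle with vertices v_0, …, v_{k−1} and, for each j ∈ [k], an edge with source v_{j mod k} and target v_{j−1} labeled Z_j (so that τ_N(T) = tr_N(Z_1 ⋯ Z_k)). For I ⊆ [k], let T_I be the quotient test digraph obtained by identifying, for each j ∈ I, the source and target vertices of the edge labeled Z_j. Then tr_N((Z_1 − Δ_N(Z_1)) ⋯ (Z_k − Δ_N(Z_k))) = Σ_{I ⊆ [k]} (−1)^{#I} τ_N(T_I). -/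
open Filter MeasureTheory Matrix
open scoped BigOperators Classical

namespace GraphPaper

/-- The directed `k`-cycle: edge `j` has source `v_{(j+1) mod k}` and target `v_j`. -/
def cycleDigr (k : ℕ) : Digr (Fin k) (Fin k) where
  src := fun j => ⟨((j : ℕ) + 1) % k, Nat.mod_lt _ j.pos⟩
  tgt := fun j => j

/-- The partition of the vertices of the `k`-cycle identifying, for each `j ∈ I`, the
source and the target of the edge `j`. -/
def cycQuotSetoid (k : ℕ) (I : Finset (Fin k)) : Setoid (Fin k) :=
  Relation.EqvGen.setoid
    (fun v w => ∃ j ∈ I, (cycleDigr k).src j = v ∧ (cycleDigr k).tgt j = w)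

/-! Expanding the trace as a sum over closed walks `q : ℤ/k → [N]`, the entry of
`Z_j - Δ(Z_j)` along step `j` is the entry of `Z_j` times the indicator of `q j ≠ q (j + 1)`.
Inclusion–exclusion over the set `I` of steps forced to be loops writes the product of these
indicators as `∑_I (-1)^#I [q j = q (j + 1) for j ∈ I]`, and the walks obeying the constraints
of `I` are exactly the vertex labellings of the quotient `T_I`, which is still connected, so its
trace carries the same normalisation `1 / N`. -/

end GraphPaper

theorem Relation.EqvGen.map {α β : Type*} {r : α → α → Prop} {r' : β → β → Prop} (f : α → β)
    (hf : ∀ a b, r a b → r' (f a) (f b)) {a b : α} (h : Relation.EqvGen r a b) :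
    Relation.EqvGen r' (f a) (f b) := by
  induction h with
  | rel a b hab => exact .rel _ _ (hf a b hab)
  | refl a => exact .refl _
  | symm a b _ ih => exact .symm _ _ ih
  | trans a b c _ _ ihab ihbc => exact .trans _ _ _ ihab ihbc

theorem Finset.prod_sub_ite_self {κ R : Type*} [DecidableEq κ] [CommRing R] (s : Finset κ)
    (p : κ → Prop) [DecidablePred p] (f : κ → R) :
    ∏ j ∈ s, (f j - if p j then f j else 0)
      = ∑ I ∈ s.powerset, (-1) ^ I.card * if ∀ j ∈ I, p j then ∏ j ∈ s, f j else 0 := by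
  rw [Finset.prod_sub]
  refine Finset.sum_congr rfl fun I hI => ?_
  rw [Finset.prod_ite_zero, mul_assoc, mul_ite, mul_zero,
    Finset.prod_sdiff (Finset.mem_powerset.mp hI)]

theorem Fintype.sum_comp_quotient_mk_eqvGen {V ι M : Type*} [Fintype V] [Fintype ι]
    [AddCommMonoid M] (r : V → V → Prop) (F : (V → ι) → M) :
    ∑ f : Quotient (Relation.EqvGen.setoid r) → ι, F (f ∘ Quotient.mk _)
      = ∑ g : V → ι, if ∀ a b, r a b → g a = g b then F g else 0 := by
  have hinj : Function.Injective fun f : Quotient (Relation.EqvGen.setoid r) → ι =>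
      f ∘ Quotient.mk _ := Quotient.mk_surjective.injective_comp_right
  have himage : Finset.univ.image (fun f : Quotient (Relation.EqvGen.setoid r) → ι =>
      f ∘ Quotient.mk _) = Finset.univ.filter fun g => ∀ a b, r a b → g a = g b := by
    ext g
    simp only [Finset.mem_image, Finset.mem_univ, true_and, Finset.mem_filter]
    constructor
    · rintro ⟨f, rfl⟩ a b hab
      exact congrArg f (Quotient.sound (Relation.EqvGen.rel a b hab))
    · intro hg
      exact ⟨Quotient.lift g fun a b hab =>
        congrArg (Quot.lift g hg) (Quot.eqvGen_sound hab), rfl⟩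
  rw [← Finset.sum_filter, ← himage, Finset.sum_image fun f _ f' _ h => hinj h]

namespace GraphPaper

theorem prodList_succ' {M : Type*} [Monoid M] (k : ℕ) (f : Fin (k + 1) → M) :
    prodList (k + 1) f = prodList k (fun j => f j.castSucc) * f (Fin.last k) := by
  simp [prodList, List.finRange_succ_last, List.map_map, Function.comp_def]

section TraceOfProduct

variable {ι R : Type*} [Fintype ι] [DecidableEq ι] [CommSemiring R]

theorem trace_prodList_mul (k : ℕ) (W : Fin k → Matrix ι ι R) (M : Matrix ι ι R) :
    Matrix.trace (prodList k W * M) = ∑ q : Fin (k + 1) → ι,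
      (∏ j : Fin k, W j (q j.castSucc) (q j.succ)) * M (q (Fin.last k)) (q 0) := by
  induction k generalizing M with
  | zero =>
    simp only [prodList, List.finRange_zero, List.map_nil, List.prod_nil, one_mul,
      Finset.univ_eq_empty, Finset.prod_empty, Fin.last_zero]
    exact ((Equiv.funUnique (Fin 1) ι).sum_comp fun a => M a a).symm
  | succ k ih =>
    rw [prodList_succ', mul_assoc, ih]
    conv_rhs => rw [← (Fin.snocEquiv fun _ => ι).sum_comp, Fintype.sum_prod_type, Finset.sum_comm]
    refine Finset.sum_congr rfl fun q _ => ?_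
    simp only [Matrix.mul_apply, Finset.mul_sum, Fin.snocEquiv, Equiv.coe_fn_mk,
      Fin.snoc_castSucc, Fin.prod_univ_castSucc, Fin.succ_last, Fin.snoc_last,
      Fin.snoc_apply_zero, mul_assoc]
    simp_rw [← Fin.castSucc_succ, Fin.snoc_castSucc]

theorem trace_prodList_succ (m : ℕ) (W : Fin (m + 1) → Matrix ι ι R) :
    Matrix.trace (prodList (m + 1) W) = ∑ q : Fin (m + 1) → ι, ∏ j, W j (q j) (q (j + 1)) := by
  rw [prodList_succ', trace_prodList_mul]
  refine Finset.sum_congr rfl fun q _ => ?_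
  simp [Fin.prod_univ_castSucc, Fin.coeSucc_eq_succ]

end TraceOfProduct

namespace Digr

variable {V E : Type*}

theorem IsConnected.ncomp_eq_one {D : Digr V E} (h : D.IsConnected) : D.ncomp = 1 := by
  obtain ⟨⟨v⟩, hconn⟩ := h
  rw [ncomp, Nat.card_eq_one_iff_unique]
  exact ⟨⟨fun x y => Quotient.inductionOn₂ x y fun a b => Quotient.sound (hconn a b)⟩,
    ⟨Quotient.mk _ v⟩⟩

theorem ncomp_eq_zero [IsEmpty V] (D : Digr V E) : D.ncomp = 0 := by
  have : IsEmpty D.Components := ⟨fun x => Quotient.inductionOn x isEmptyElim⟩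
  exact Nat.card_of_isEmpty

theorem IsConnected.quotient {D : Digr V E} (h : D.IsConnected) (s : Setoid V) :
    (D.quotient s).IsConnected := by
  obtain ⟨⟨v⟩, hconn⟩ := h
  refine ⟨⟨Quotient.mk s v⟩, fun x y => Quotient.inductionOn₂ x y fun a b => ?_⟩
  exact (hconn a b).map (Quotient.mk s) fun _ _ ⟨e, hsrc, htgt⟩ => ⟨e, hsrc ▸ rfl, htgt ▸ rfl⟩

theorem tdTrace_of_isEmpty [IsEmpty V] [IsEmpty E] (D : Digr V E) {ι : Type*}
    (A : E → Matrix ι ι ℂ) : D.tdTrace A = 1 := by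
  simp [tdTrace, D.ncomp_eq_zero, finsum_unique, finprod_of_isEmpty]

end Digr

theorem cycleDigr_src (m : ℕ) (j : Fin (m + 1)) : (cycleDigr (m + 1)).src j = j + 1 := by
  ext
  simp [cycleDigr, Fin.val_add]

theorem cycleDigr_isConnected (m : ℕ) : (cycleDigr (m + 1)).IsConnected := by
  have hzero : ∀ v : Fin (m + 1), (cycleDigr (m + 1)).compSetoid v 0 := by
    intro v
    induction v using Fin.induction with
    | zero => exact .refl _
    | succ i ih =>
      refine .trans _ _ _ (.rel _ _ ⟨i.castSucc, ?_, rfl⟩) ih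
      rw [cycleDigr_src, Fin.coeSucc_eq_succ]
  exact ⟨⟨0⟩, fun v w => .trans _ _ _ (hzero v) (.symm _ _ (hzero w))⟩

theorem tdTrace_cycleDigr_quotient {ι : Type*} [Fintype ι] (m : ℕ) (I : Finset (Fin (m + 1)))
    (A : Fin (m + 1) → Matrix ι ι ℂ) :
    ((cycleDigr (m + 1)).quotient (cycQuotSetoid (m + 1) I)).tdTrace A
      = 1 / Fintype.card ι * ∑ q : Fin (m + 1) → ι,
          if ∀ j ∈ I, q j = q (j + 1) then ∏ j, A j (q j) (q (j + 1)) else 0 := by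
  rw [Digr.tdTrace, ((cycleDigr_isConnected m).quotient _).ncomp_eq_one,
    pow_one, Nat.card_eq_fintype_card, finsum_eq_sum_of_fintype]
  congr 1
  refine (Fintype.sum_comp_quotient_mk_eqvGen _ fun g : Fin (m + 1) → ι =>
    ∏ᶠ j, A j (g j) (g ((cycleDigr (m + 1)).src j))).trans ?_
  refine Finset.sum_congr (by congr; exact Subsingleton.elim _ _) fun q _ => ?_
  simp only [finprod_eq_prod_of_fintype, cycleDigr_src]
  refine if_congr ?_ rfl rfl
  simp only [cycleDigr, forall_exists_index, and_imp]
  exact ⟨fun h j hj => (h _ _ j hj rfl rfl).symm,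
    fun h a b j hj ha hb => ha ▸ hb ▸ (h j hj).symm⟩

theorem diagPart_apply {ι : Type*} [DecidableEq ι] (M : Matrix ι ι ℂ) (a b : ι) :
    diagPart M a b = if a = b then M a b else 0 := by
  rw [diagPart, Matrix.diagonal_apply]
  split_ifs with h <;> simp [h]

/-- **Lemma (expansion of `tr_N((Z_1 − Δ(Z_1)) ⋯ (Z_k − Δ(Z_k)))` into traces of
quotient test digraphs).** -/
theorem statement4 (N k : ℕ) (hN : 0 < N) (Z : Fin k → Matrix (Fin N) (Fin N) ℂ) :
    Matrix.trace (prodList k (fun j => Z j - diagPart (Z j))) / (N : ℂ)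
      = ∑ I : Finset (Fin k), (-1 : ℂ) ^ I.card *
          ((cycleDigr k).quotient (cycQuotSetoid k I)).tdTrace (fun j => Z j) := by
  cases k with
  | zero =>
    have huniv : (Finset.univ : Finset (Finset (Fin 0))) = {∅} := rfl
    rw [huniv, Finset.sum_singleton, Finset.card_empty, pow_zero, one_mul,
      Digr.tdTrace_of_isEmpty]
    simp [prodList, hN.ne']
  | succ m =>
    rw [trace_prodList_succ]
    simp_rw [Matrix.sub_apply, diagPart_apply, Finset.prod_sub_ite_self, Finset.powerset_univ,
      tdTrace_cycleDigr_quotient]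
    rw [Finset.sum_comm, Finset.sum_div, Fintype.card_fin]
    refine Finset.sum_congr rfl fun I _ => ?_
    rw [← Finset.mul_sum, mul_div_assoc, one_div_mul_eq_div]
    -- the two sides differ only in the `Decidable` instances of the conditions
    congr!

end GraphPaper
end

section
/- Let T be a weakly connected test digraph with edge coloring χ : E(T) → 𝒞 and deterministic labels X_e ∈ ⊗_{s∈𝒮_{χ(e)}} M_N(ℂ), let Λ_v (v ∈ V(T)) be deterministic diagonal matrices in M_{N^{#𝒮}}(ℂ), and let (Σ_c)_{c∈𝒞} be independent random permutation matrices with Σ_c uniformly distributed among the permutation matrices of size N^{#𝒮_c}. Let π = (π_s)_{s∈𝒮} be a family of partitions of V(T) with π_s ≥ ρ_s for every s ∈ 𝒮, and assume N^{#𝒮_c} ≥ #V(T_{π,c}) for every c ∈ 𝒞. Then 𝔼 γ_N(T,π) = N^{Σ_{s∈𝒮}(#π_s − 1)} · λ_N(T,π) · ∏_{c∈𝒞} [ ((N^{#𝒮_c} − #V(T_{π,c}))! / (N^{#𝒮_c})!) · N^{#𝒮_c · #Comp(T_{π,c})} · τ^∘_{N^{#𝒮_c}}(T_{π,c}) ].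 -/
open Filter MeasureTheory Matrix
open scoped BigOperators Classical

namespace GraphPaper

/-! Fix an index tuple `i` whose coordinate kernels are the `π_s`. Since `π_s ≥ ρ_s`, the
coordinates of `i` outside `𝒮_{χ(e)}` agree at both ends of every edge `e`, so the entry of
`X̲_e` picked out by `i` only sees `Σ_{χ(e)} ∘ j_{χ(e)}`, where `j_c` is the map induced by `i`
on the blocks of `ω_{π,c}`; it is injective because the kernels are exactly the `π_s`. The
expectation therefore factors over the colors, and as `σ` runs over the permutations of a set
of size `n`, the composite `σ ∘ j` runs over the injective maps, each hit `(n - #V(T_{π,c}))!`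
times. The result is the injective trace of `T_{π,c}`, independent of `i`, and summing the
`Λ`-weights over `i` leaves `λ_N(T,π)`. -/

theorem pow_sum_sub_one_mul_one_div_pow_sum {K ι : Type*} [Field K] [Fintype ι] {f : ι → ℕ}
    (hf : ∀ i, 0 < f i) (x : K) :
    x ^ (∑ i, (f i - 1)) * (1 / x ^ ∑ i, f i) = 1 / x ^ Fintype.card ι := by
  have hsum : ∑ i, f i = ∑ i, (f i - 1) + Fintype.card ι := by
    rw [← Finset.card_univ, Finset.card_eq_sum_ones, ← Finset.sum_add_distrib]
    exact Finset.sum_congr rfl fun i _ => (Nat.sub_add_cancel (hf i)).symm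
  rw [hsum, pow_add]
  rcases eq_or_ne x 0 with rfl | hx
  · rcases isEmpty_or_nonempty ι with _ | _ <;> simp
  · field_simp

section PermutationCount

open Finset Function

variable {α ι : Type*} [Fintype α] [Fintype ι] [DecidableEq ι]

theorem card_perm_comp_eq_self {j : α → ι} (hj : Injective j) :
    #{σ : Equiv.Perm ι | ⇑σ ∘ j = j} = (Fintype.card ι - Fintype.card α).factorial := by
  have e : {σ : Equiv.Perm ι // ⇑σ ∘ j = j} ≃ Equiv.Perm {x // x ∉ Set.range j} :=
    (Equiv.subtypeEquivRight fun σ => by simp [funext_iff]).trans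
      (Equiv.Perm.subtypeEquivSubtypePerm _).symm
  rw [← Fintype.card_subtype, Fintype.card_congr e, Fintype.card_perm,
    Fintype.card_subtype_compl, Set.card_range_of_injective hj]

theorem exists_perm_comp_eq {j k : α → ι} (hj : Injective j) (hk : Injective k) :
    ∃ τ : Equiv.Perm ι, ⇑τ ∘ j = k := by
  refine ⟨Equiv.extendSubtype ((Equiv.ofInjective j hj).symm.trans (Equiv.ofInjective k hk)),
    funext fun a => ?_⟩
  rw [Function.comp_apply, Equiv.extendSubtype_apply_of_mem _ _ ⟨a, rfl⟩]
  exact congrArg Subtype.val ((Equiv.ofInjective k hk).congr_arg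
    ((Equiv.ofInjective j hj).symm_apply_apply a))

theorem card_perm_comp_eq {j k : α → ι} (hj : Injective j) (hk : Injective k) :
    #{σ : Equiv.Perm ι | ⇑σ ∘ j = k} = (Fintype.card ι - Fintype.card α).factorial := by
  obtain ⟨τ, rfl⟩ := exists_perm_comp_eq hj hk
  rw [← card_perm_comp_eq_self hj]
  refine card_bij' (fun σ _ => τ⁻¹ * σ) (fun σ _ => τ * σ) ?_ ?_ (by simp) (by simp)
  · intro σ hσ
    simp only [mem_filter, mem_univ, true_and] at hσ ⊢
    rw [Equiv.Perm.coe_mul, comp_assoc, hσ, ← comp_assoc, ← Equiv.Perm.coe_mul, inv_mul_cancel,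
      Equiv.Perm.coe_one, id_comp]
  · intro σ hσ
    simp only [mem_filter, mem_univ, true_and] at hσ ⊢
    rw [Equiv.Perm.coe_mul, comp_assoc, hσ]

theorem sum_perm_comp {M : Type*} [AddCommMonoid M] {j : α → ι} (hj : Injective j)
    (f : (α → ι) → M) :
    ∑ σ : Equiv.Perm ι, f (⇑σ ∘ j)
      = (Fintype.card ι - Fintype.card α).factorial •
          ∑ k : α → ι, if Injective k then f k else 0 := by
  rw [← sum_fiberwise univ (fun σ : Equiv.Perm ι => ⇑σ ∘ j) (fun σ => f (⇑σ ∘ j)),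
    smul_sum]
  refine sum_congr rfl fun k _ => ?_
  split_ifs with hk
  · rw [sum_congr rfl fun σ hσ => congrArg f (mem_filter.mp hσ).2, sum_const,
      card_perm_comp_eq hj hk]
  · rw [smul_zero]
    refine sum_eq_zero fun σ hσ => absurd ?_ hk
    exact (mem_filter.mp hσ).2 ▸ σ.injective.comp hj

end PermutationCount

namespace Digr

open Finset Function

theorem nonempty_of_ncomp_ne_zero {W F : Type*} (Q : Digr W F) (h : Q.ncomp ≠ 0) :
    Nonempty W :=
  (nonempty_quotient_iff _).mp (Nat.card_ne_zero.mp h).1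

variable {W F ι : Type*} [Fintype W] [Fintype F] [Fintype ι] [DecidableEq ι] (Q : Digr W F)

theorem card_pow_ncomp_mul_tdTraceInj (A : F → Matrix ι ι ℂ) :
    (Nat.card ι : ℂ) ^ Q.ncomp * Q.tdTraceInj A
      = ∑ k : W → ι, if Injective k then ∏ e, A e (k (Q.tgt e)) (k (Q.src e)) else 0 := by
  simp only [tdTraceInj, finsum_eq_sum_of_fintype, finprod_eq_prod_of_fintype]
  by_cases hpow : (Nat.card ι : ℂ) ^ Q.ncomp = 0
  · obtain ⟨hι, hc⟩ := pow_eq_zero_iff'.mp hpow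
    have : Nonempty W := Q.nonempty_of_ncomp_ne_zero hc
    have : IsEmpty ι := Nat.card_eq_zero.mp (Nat.cast_eq_zero.mp hι) |>.resolve_right
      (not_infinite_iff_finite.mpr inferInstance)
    simp
  · rw [← mul_assoc, mul_one_div_cancel hpow, one_mul]

theorem sum_perm_prod_comp {j : W → ι} (hj : Injective j) (A : F → Matrix ι ι ℂ) :
    ∑ τ : Equiv.Perm ι, ∏ e, A e (τ (j (Q.tgt e))) (τ (j (Q.src e)))
      = ((Nat.card ι - Nat.card W).factorial : ℂ) * (Nat.card ι : ℂ) ^ Q.ncomp *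
          Q.tdTraceInj A := by
  rw [mul_assoc, card_pow_ncomp_mul_tdTraceInj, Nat.card_eq_fintype_card,
    Nat.card_eq_fintype_card, ← nsmul_eq_mul]
  exact sum_perm_comp hj fun k => ∏ e, A e (k (Q.tgt e)) (k (Q.src e))

end Digr

section Model

open Finset Function

variable {S C V E : Type*} {rel : S → C → Prop} {N : ℕ}

theorem card_colIx [Finite S] (c : C) :
    Nat.card (ColIx rel c N) = N ^ Nat.card {s : S // rel s c} := by
  rw [Nat.card_fun, Nat.card_eq_fintype_card, Fintype.card_fin]

theorem omegaSetoid_iff {π : S → Setoid V} {c : C} {v w : V} :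
    omegaSetoid rel π c v w ↔ ∀ s : {s : S // rel s c}, π s.1 v w := by
  change sInf (Set.range fun s : {s : S // rel s c} => π s.1) v w ↔ _
  simp only [Setoid.sInf_iff, Set.forall_mem_range]

theorem exists_injective_colIx {π : S → Setoid V} {i : V → BigIx S N}
    (hi : ∀ s, Setoid.ker (fun v => i v s) = π s) (c : C) :
    ∃ j : Quotient (omegaSetoid rel π c) → ColIx rel c N,
      Injective j ∧ ∀ v, j (Quotient.mk _ v) = fun s => i v s.1 := by
  have hω : ∀ v w, omegaSetoid rel π c v w ↔
      (fun s : {s : S // rel s c} => i v s.1) = fun s => i w s.1 := fun v w => by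
    rw [omegaSetoid_iff, funext_iff]
    exact forall_congr' fun s => by rw [← hi s.1, Setoid.ker_def]
  refine ⟨Quotient.lift _ fun v w h => (hω v w).mp h, ?_, fun v => rfl⟩
  rintro ⟨v⟩ ⟨w⟩ h
  exact Quotient.sound ((hω v w).mpr h)

theorem conjTranspose_permMat_mul_mul_permMat_apply {ι : Type*} [Fintype ι] [DecidableEq ι]
    (σ : Equiv.Perm ι) (A : Matrix ι ι ℂ) (a b : ι) :
    ((permMat σ)ᴴ * A * permMat σ) a b = A (σ a) (σ b) := by
  simp [Matrix.mul_apply, permMat, Matrix.conjTranspose_apply, Finset.sum_ite_eq, apply_ite]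

theorem conjEmbed_apply_of_eq [Fintype S] (σ : (c : C) → Equiv.Perm (ColIx rel c N))
    {c c' : C} (h : c = c') (A : Matrix (ColIx rel c N) (ColIx rel c N) ℂ) {a b : BigIx S N}
    (hab : ∀ s, ¬ rel s c' → a s = b s) :
    conjEmbed rel c (σ c) A a b
      = castCol rel h A (σ c' (fun s => a s.1)) (σ c' (fun s => b s.1)) := by
  subst h
  rw [conjEmbed, embed, Matrix.of_apply, if_pos hab]
  exact conjTranspose_permMat_mul_mul_permMat_apply _ _ _ _

theorem apply_tgt_eq_apply_src {D : Digr V E} {χ : E → C} {π : S → Setoid V}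
    {i : V → BigIx S N} (hρ : ∀ s, rhoSetoid D χ rel s ≤ π s)
    (hi : ∀ s, Setoid.ker (fun v => i v s) = π s) {e : E} {s : S} (hs : ¬ rel s (χ e)) :
    i (D.tgt e) s = i (D.src e) s := by
  have hρe : rhoSetoid D χ rel s (D.src e) (D.tgt e) :=
    Relation.EqvGen.rel _ _ ⟨e, hs, rfl, rfl⟩
  exact (Setoid.ker_def.mp (hi s ▸ hρ s hρe)).symm

theorem prod_conjEmbed_eq_prod_colors [Fintype S] [Fintype C] [Fintype E] {D : Digr V E}
    {χ : E → C} {π : S → Setoid V} (hρ : ∀ s, rhoSetoid D χ rel s ≤ π s)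
    (X : (e : E) → Matrix (ColIx rel (χ e) N) (ColIx rel (χ e) N) ℂ)
    {i : V → BigIx S N} (hi : ∀ s, Setoid.ker (fun v => i v s) = π s)
    (j : (c : C) → Quotient (omegaSetoid rel π c) → ColIx rel c N)
    (hj : ∀ c v, j c (Quotient.mk _ v) = fun s => i v s.1)
    (σ : (c : C) → Equiv.Perm (ColIx rel c N)) :
    ∏ᶠ e, conjEmbed rel (χ e) (σ (χ e)) (X e) (i (D.tgt e)) (i (D.src e))
      = ∏ c, ∏ e, castCol rel e.2 (X e.1)
          (σ c (j c ((Tpc D χ rel π c).tgt e))) (σ c (j c ((Tpc D χ rel π c).src e))) := by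
  rw [finprod_eq_prod_of_fintype, ← Fintype.prod_fiberwise χ]
  refine prod_congr rfl fun c _ => prod_congr rfl fun e _ => ?_
  simp only [Tpc, Digr.quotient, Digr.restrict, hj]
  exact conjEmbed_apply_of_eq σ e.2 (X e.1) fun s hs =>
    apply_tgt_eq_apply_src hρ hi (by rwa [e.2])

end Model

section Expectation

open Finset

variable {S C V E : Type*} [Fintype S] [Fintype C] [Fintype V] {rel : S → C → Prop} {N : ℕ}
  {D : Digr V E} {χ : E → C} {π : S → Setoid V}

theorem sum_perm_prod_conjEmbed [Fintype E] (hρ : ∀ s, rhoSetoid D χ rel s ≤ π s)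
    (X : (e : E) → Matrix (ColIx rel (χ e) N) (ColIx rel (χ e) N) ℂ)
    {i : V → BigIx S N} (hi : ∀ s, Setoid.ker (fun v => i v s) = π s) :
    ∑ σ : (c : C) → Equiv.Perm (ColIx rel c N),
        ∏ᶠ e, conjEmbed rel (χ e) (σ (χ e)) (X e) (i (D.tgt e)) (i (D.src e))
      = ∏ c, ((N ^ Nat.card {s : S // rel s c} -
              Nat.card (Quotient (omegaSetoid rel π c))).factorial : ℂ)
          * (N : ℂ) ^ (Nat.card {s : S // rel s c} * (Tpc D χ rel π c).ncomp)
          * (Tpc D χ rel π c).tdTraceInj (fun e => castCol rel e.2 (X e.1)) := by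
  choose j hj_inj hj using exists_injective_colIx (rel := rel) hi
  simp only [prod_conjEmbed_eq_prod_colors hρ X hi j hj]
  refine (Fintype.prod_sum fun c (τ : Equiv.Perm (ColIx rel c N)) =>
      ∏ e, castCol rel e.2 (X e.1)
        (τ (j c ((Tpc D χ rel π c).tgt e))) (τ (j c ((Tpc D χ rel π c).src e)))).symm.trans
    (prod_congr rfl fun c _ => ?_)
  rw [pow_mul, ← Nat.cast_pow, ← card_colIx]
  exact (Tpc D χ rel π c).sum_perm_prod_comp (hj_inj c) fun e => castCol rel e.2 (X e.1)

theorem sum_perm_gammaN (X : (e : E) → Matrix (ColIx rel (χ e) N) (ColIx rel (χ e) N) ℂ)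
    (Λ : V → Matrix (BigIx S N) (BigIx S N) ℂ) {K : ℂ}
    (hK : ∀ i : V → BigIx S N, (∀ s, Setoid.ker (fun v => i v s) = π s) →
      ∑ σ : (c : C) → Equiv.Perm (ColIx rel c N),
        ∏ᶠ e, conjEmbed rel (χ e) (σ (χ e)) (X e) (i (D.tgt e)) (i (D.src e)) = K) :
    ∑ σ, gammaN rel D χ N X Λ π σ
      = 1 / (N : ℂ) ^ Nat.card S *
          (∑ᶠ i : V → BigIx S N,
            if ∀ s, Setoid.ker (fun v => i v s) = π s then ∏ᶠ v, Λ v (i v) (i v) else 0) *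
          K := by
  simp only [gammaN, finsum_eq_sum_of_fintype, ← mul_sum, mul_assoc]
  rw [sum_comm, sum_mul]
  refine congrArg _ (sum_congr rfl fun i _ => ?_)
  split_ifs with hi
  · rw [← mul_sum, hK i hi]
  · simp

end Expectation

theorem statement7_general {C S V E : Type} [Fintype C] [Fintype S] [Fintype V] [Fintype E]
    (rel : S → C → Prop)
    (D : Digr V E) (hconn : D.IsConnected) (χ : E → C) (N : ℕ)
    (X : (e : E) → Matrix (ColIx rel (χ e) N) (ColIx rel (χ e) N) ℂ)
    (Λ : V → Matrix (BigIx S N) (BigIx S N) ℂ)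
    (π : S → Setoid V) (hρ : ∀ s : S, rhoSetoid D χ rel s ≤ π s) :
    Eperm rel N (gammaN rel D χ N X Λ π)
      = (N : ℂ) ^ (∑ᶠ s : S, (Nat.card (Quotient (π s)) - 1)) * lambdaN N Λ π *
        ∏ᶠ c : C,
          ((((N ^ Nat.card {s : S // rel s c} -
                Nat.card (Quotient (omegaSetoid rel π c))).factorial : ℂ) /
              ((N ^ Nat.card {s : S // rel s c}).factorial : ℂ))
            * (N : ℂ) ^ (Nat.card {s : S // rel s c} * (Tpc D χ rel π c).ncomp)
            * (Tpc D χ rel π c).tdTraceInj (fun e => castCol rel e.2 (X e.1))) := by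
  have hπ : ∀ s, 0 < Nat.card (Quotient (π s)) := fun s =>
    have := (nonempty_quotient_iff (π s)).mpr hconn.1
    Nat.card_pos
  have hscale := pow_sum_sub_one_mul_one_div_pow_sum hπ (N : ℂ)
  have hcard : Nat.card ((c : C) → Equiv.Perm (ColIx rel c N))
      = ∏ c, (N ^ Nat.card {s : S // rel s c}).factorial := by
    rw [Nat.card_pi]
    exact Finset.prod_congr rfl fun c _ => by rw [Nat.card_perm, card_colIx]
  rw [Eperm, finsum_eq_sum_of_fintype,
    sum_perm_gammaN X Λ fun i hi => sum_perm_prod_conjEmbed hρ X hi, hcard, lambdaN]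
  simp only [finsum_eq_sum_of_fintype, finprod_eq_prod_of_fintype]
  rw [Nat.card_eq_fintype_card (α := S), ← hscale]
  simp only [div_mul_eq_mul_div, Finset.prod_div_distrib]
  push_cast
  ring

/-- **Proposition (exact evaluation of `𝔼 γ_N(T,π)`).** -/
theorem statement7 {C S V E : Type} [Fintype C] [Fintype S] [Fintype V] [Fintype E]
    (rel : S → C → Prop) (hne : ∀ c : C, ∃ s : S, rel s c)
    (D : Digr V E) (hconn : D.IsConnected) (χ : E → C) (N : ℕ)
    (X : (e : E) → Matrix (ColIx rel (χ e) N) (ColIx rel (χ e) N) ℂ)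
    (Λ : V → Matrix (BigIx S N) (BigIx S N) ℂ) (hΛ : ∀ v, (Λ v).IsDiag)
    (π : S → Setoid V) (hρ : ∀ s : S, rhoSetoid D χ rel s ≤ π s)
    (hbig : ∀ c : C, Nat.card (Quotient (omegaSetoid rel π c))
      ≤ N ^ (Nat.card {s : S // rel s c})) :
    Eperm rel N (gammaN rel D χ N X Λ π)
      = (N : ℂ) ^ (∑ᶠ s : S, (Nat.card (Quotient (π s)) - 1)) * lambdaN N Λ π *
        ∏ᶠ c : C,
          ((((N ^ Nat.card {s : S // rel s c} -
                Nat.card (Quotient (omegaSetoid rel π c))).factorial : ℂ) /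
              ((N ^ Nat.card {s : S // rel s c}).factorial : ℂ))
            * (N : ℂ) ^ (Nat.card {s : S // rel s c} * (Tpc D χ rel π c).ncomp)
            * (Tpc D χ rel π c).tdTraceInj (fun e => castCol rel e.2 (X e.1))) :=
  statement7_general rel D hconn χ N X Λ π hρ

end GraphPaper
end

section
/- Let T be a finite directed multigraph with edge coloring χ : E(T) → 𝒞 and let π = (π_s)_{s∈𝒮} be a family of partitions of V(T) with π_t ≥ ρ_t for all t ∈ 𝒮. Fix s ∈ 𝒮, let e_1, …, e_m ∈ E(T), write {j ∈ [m] : χ(e_j) ∈ 𝒞_s} = {j_1 < j_2 < … < j_n}, and for each i let A_i be the weakly connected component of T_{π,χ(e_i)} containing the edge e_i. Suppose that for some c ∈ 𝒞_s the sequence (e_j)_{j=1}^m forms a walk when viewed in T/ω_{π,c} (i.e. [(e_j)_+]_{ω_{π,c}} = [(e_{j+1})_−]_{ω_{π,c}} for 1 ≤ j < m). Then in GCC(T,π,s) there is a walk from [(e_1)_−]_{π_s} to [(e_m)_+]_{π_s} traversing, in order, the edges [(e_{j_1})_−]_{ω_{π,χ(e_{j_1})}}, [(e_{j_1})_+]_{ω_{π,χ(e_{j_1})}},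 [(e_{j_2})_−]_{ω_{π,χ(e_{j_2})}}, [(e_{j_2})_+]_{ω_{π,χ(e_{j_2})}}, …, [(e_{j_n})_+]_{ω_{π,χ(e_{j_n})}}, and visiting precisely the vertices [(e_1)_−]_{π_s} = [(e_{j_1})_−]_{π_s}, A_{j_1}, [(e_{j_1})_+]_{π_s} = [(e_{j_2})_−]_{π_s}, A_{j_2}, …, A_{j_n}, [(e_{j_n})_+]_{π_s} = [(e_m)_+]_{π_s}; in particular [(e_{j_i})_+]_{π_s} = [(e_{j_{i+1}})_−]_{π_s} for each 1 ≤ i < n, [(e_1)_−]_{π_s} = [(e_{j_1})_−]_{π_s}, and [(e_{j_n})_+]_{π_s} = [(e_m)_+]_{π_s}. -/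
open Filter MeasureTheory Matrix
open scoped BigOperators Classical

namespace GraphPaper

/-- **Lemma (walks induced in the graph of colored components).**
The walk `(e_1, …, e_m)` in `T/ω_{π,c}` induces a walk in `GCC(T,π,s)`: consecutive
`π_s`-blocks along the subsequence of `𝒞_s`-colored edges agree, the walk starts at
`[(e_1)_-]_{π_s}` and ends at `[(e_m)_+]_{π_s}`, each edge `e_{j_i}` determines the
component `A_i` of `T_{π,χ(e_{j_i})}` containing both of its endpoints, and the two
corresponding edges of `GCC(T,π,s)` join `A_i` to `[(e_{j_i})_-]_{π_s}` and
`[(e_{j_i})_+]_{π_s}` respectively. -/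
theorem statement11 {C S V E : Type} [Fintype C] [Fintype S] [Fintype V] [Fintype E]
    (rel : S → C → Prop)
    (D : Digr V E) (χ : E → C)
    (π : S → Setoid V) (hρ : ∀ t : S, rhoSetoid D χ rel t ≤ π t)
    (s : S) (m : ℕ) (hm : 0 < m) (e : Fin m → E)
    (n : ℕ) (J : Fin n → Fin m) (hJmono : StrictMono J)
    (hJrange : ∀ j : Fin m, rel s (χ (e j)) ↔ ∃ i : Fin n, J i = j)
    (c : C) (hc : rel s c)
    (hwalk : ∀ (j : ℕ) (h : j + 1 < m),
      Quotient.mk (omegaSetoid rel π c) (D.tgt (e ⟨j, Nat.lt_of_succ_lt h⟩))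
        = Quotient.mk (omegaSetoid rel π c) (D.src (e ⟨j + 1, h⟩))) :
    (∀ (i : ℕ) (h : i + 1 < n),
        Quotient.mk (π s) (D.tgt (e (J ⟨i, Nat.lt_of_succ_lt h⟩)))
          = Quotient.mk (π s) (D.src (e (J ⟨i + 1, h⟩))))
    ∧ (∀ h : 0 < n,
        Quotient.mk (π s) (D.src (e ⟨0, hm⟩)) = Quotient.mk (π s) (D.src (e (J ⟨0, h⟩)))
        ∧ Quotient.mk (π s) (D.tgt (e ⟨m - 1, Nat.sub_lt hm Nat.one_pos⟩))
            = Quotient.mk (π s) (D.tgt (e (J ⟨n - 1, Nat.sub_lt h Nat.one_pos⟩))))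
    ∧ (n = 0 →
        Quotient.mk (π s) (D.src (e ⟨0, hm⟩))
          = Quotient.mk (π s) (D.tgt (e ⟨m - 1, Nat.sub_lt hm Nat.one_pos⟩)))
    ∧ (∀ i : Fin n,
        (Quotient.mk (Tpc D χ rel π (χ (e (J i)))).compSetoid
            (Quotient.mk (omegaSetoid rel π (χ (e (J i)))) (D.src (e (J i))))
          = Quotient.mk (Tpc D χ rel π (χ (e (J i)))).compSetoid
            (Quotient.mk (omegaSetoid rel π (χ (e (J i)))) (D.tgt (e (J i)))))
        ∧ ∀ hcol : rel s (χ (e (J i))),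
            ((GCC D χ rel π s).src
                ⟨⟨χ (e (J i)), hcol⟩,
                  Quotient.mk (omegaSetoid rel π (χ (e (J i)))) (D.src (e (J i)))⟩
              = (GCC D χ rel π s).src
                ⟨⟨χ (e (J i)), hcol⟩,
                  Quotient.mk (omegaSetoid rel π (χ (e (J i)))) (D.tgt (e (J i)))⟩)
            ∧ (GCC D χ rel π s).tgt
                ⟨⟨χ (e (J i)), hcol⟩,
                  Quotient.mk (omegaSetoid rel π (χ (e (J i)))) (D.src (e (J i)))⟩
              = Sum.inl (Quotient.mk (π s) (D.src (e (J i))))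
            ∧ (GCC D χ rel π s).tgt
                ⟨⟨χ (e (J i)), hcol⟩,
                  Quotient.mk (omegaSetoid rel π (χ (e (J i)))) (D.tgt (e (J i)))⟩
              = Sum.inl (Quotient.mk (π s) (D.tgt (e (J i))))) := by
  classical
  have homega : ∀ {x y : V}, (omegaSetoid rel π c) x y → (π s) x y := by
    intro x y hxy
    exact Setoid.le_def.mp
      (iInf_le (fun s' : {s' : S // rel s' c} => π s'.1) ⟨s, hc⟩) hxy
  have step : ∀ (j : ℕ) (h : j + 1 < m),
      Quotient.mk (π s) (D.tgt (e ⟨j, Nat.lt_of_succ_lt h⟩))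
        = Quotient.mk (π s) (D.src (e ⟨j + 1, h⟩)) := by
    intro j h
    exact Quotient.sound (homega (Quotient.exact (hwalk j h)))
  have edge_pi : ∀ (j : Fin m), ¬ rel s (χ (e j)) →
      Quotient.mk (π s) (D.src (e j)) = Quotient.mk (π s) (D.tgt (e j)) := by
    intro j hnr
    exact Quotient.sound
      (Setoid.le_def.mp (hρ s) (Relation.EqvGen.rel _ _ ⟨e j, hnr, rfl, rfl⟩))
  have nonrel : ∀ (j : ℕ) (hj : j < m), (∀ i : Fin n, ((J i : ℕ) ≠ j)) →
      ¬ rel s (χ (e ⟨j, hj⟩)) := by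
    intro j hj hjn hr
    obtain ⟨i, hi⟩ := (hJrange ⟨j, hj⟩).mp hr
    exact hjn i (by rw [hi])
  have chain : ∀ (a b : ℕ) (hab : a ≤ b) (hb : b < m),
      (∀ (j : ℕ) (hj1 : a ≤ j) (hj2 : j < b), ¬ rel s (χ (e ⟨j, lt_trans hj2 hb⟩))) →
      Quotient.mk (π s) (D.src (e ⟨a, lt_of_le_of_lt hab hb⟩))
        = Quotient.mk (π s) (D.src (e ⟨b, hb⟩)) := by
    intro a b hab
    induction b, hab using Nat.le_induction with
    | base => intro hb _; rfl
    | succ b hab ih =>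
      intro hb hns
      have hbm : b < m := Nat.lt_of_succ_lt hb
      have h1 := ih hbm (fun j hj1 hj2 => hns j hj1 (Nat.lt_succ_of_lt hj2))
      have h2 := edge_pi ⟨b, hbm⟩ (hns b hab (Nat.lt_succ_self b))
      exact h1.trans (h2.trans (step b hb))
  refine ⟨?_, ?_, ?_, ?_⟩
  · -- claim 1
    intro i h
    set a : ℕ := (J ⟨i, Nat.lt_of_succ_lt h⟩ : ℕ) with ha
    set b : ℕ := (J ⟨i + 1, h⟩ : ℕ) with hbdef
    have hab : a < b := hJmono (by exact Fin.mk_lt_mk.mpr (Nat.lt_succ_self i))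
    have hbm : b < m := (J ⟨i + 1, h⟩).isLt
    have ha1 : a + 1 ≤ b := hab
    have ha1m : a + 1 < m := lt_of_le_of_lt ha1 hbm
    have hstep := step a ha1m
    have hch := chain (a + 1) b ha1 hbm (by
      intro j hj1 hj2
      refine nonrel j (lt_trans hj2 hbm) ?_
      intro i' hi'
      have h1 : J ⟨i, Nat.lt_of_succ_lt h⟩ < J i' := by
        rw [Fin.lt_iff_val_lt_val, hi']; omega
      have h2 : J i' < J ⟨i + 1, h⟩ := by
        rw [Fin.lt_iff_val_lt_val, hi']; omega
      have h1' := hJmono.lt_iff_lt.mp h1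
      have h2' := hJmono.lt_iff_lt.mp h2
      rw [Fin.lt_iff_val_lt_val] at h1' h2'
      simp only at h1' h2'
      omega)
    have goal1 : Quotient.mk (π s) (D.tgt (e ⟨a, Nat.lt_of_succ_lt ha1m⟩))
        = Quotient.mk (π s) (D.src (e ⟨b, hbm⟩)) := hstep.trans hch
    have e1 : (⟨a, Nat.lt_of_succ_lt ha1m⟩ : Fin m) = J ⟨i, Nat.lt_of_succ_lt h⟩ :=
      Fin.ext rfl
    have e2 : (⟨b, hbm⟩ : Fin m) = J ⟨i + 1, h⟩ := Fin.ext rfl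
    rwa [e1, e2] at goal1
  · -- claim 2
    intro h
    constructor
    · set a : ℕ := (J ⟨0, h⟩ : ℕ) with ha
      have ham : a < m := (J ⟨0, h⟩).isLt
      have hch := chain 0 a (Nat.zero_le a) ham (by
        intro j hj1 hj2
        refine nonrel j (lt_trans hj2 ham) ?_
        intro i' hi'
        have : J ⟨0, h⟩ ≤ J i' := hJmono.monotone (by
          rw [Fin.le_iff_val_le_val]; exact Nat.zero_le _)
        rw [Fin.le_iff_val_le_val, hi'] at this
        omega)
      have e2 : (⟨a, ham⟩ : Fin m) = J ⟨0, h⟩ := Fin.ext rfl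
      rw [e2] at hch
      exact hch
    · set a : ℕ := (J ⟨n - 1, Nat.sub_lt h Nat.one_pos⟩ : ℕ) with ha
      have ham : a < m := (J _).isLt
      have hab : a ≤ m - 1 := by omega
      rcases eq_or_lt_of_le hab with heq | hlt
      · have e2 : (⟨m - 1, Nat.sub_lt hm Nat.one_pos⟩ : Fin m)
            = J ⟨n - 1, Nat.sub_lt h Nat.one_pos⟩ := Fin.ext heq.symm
        rw [e2]
      · -- a < m - 1
        have nons : ∀ (j : ℕ) (hj1 : a < j) (hjm : j < m),
            ¬ rel s (χ (e ⟨j, hjm⟩)) := by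
          intro j hj1 hjm
          refine nonrel j hjm ?_
          intro i' hi'
          have : J i' ≤ J ⟨n - 1, Nat.sub_lt h Nat.one_pos⟩ := hJmono.monotone (by
            rw [Fin.le_iff_val_le_val]
            have := i'.isLt; simp only; omega)
          rw [Fin.le_iff_val_le_val, hi'] at this
          omega
        have ha1m : a + 1 < m := by omega
        have hm1 : m - 1 < m := Nat.sub_lt hm Nat.one_pos
        have hstep := step a ha1m
        have hch := chain (a + 1) (m - 1) (by omega) hm1 (by
          intro j hj1 hj2
          exact nons j (by omega) (lt_trans hj2 hm1))
        have hend := edge_pi ⟨m - 1, hm1⟩ (nons (m - 1) (by omega) hm1)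
        have goal2 : Quotient.mk (π s) (D.tgt (e ⟨a, Nat.lt_of_succ_lt ha1m⟩))
            = Quotient.mk (π s) (D.tgt (e ⟨m - 1, hm1⟩)) :=
          hstep.trans (hch.trans hend)
        have e1 : (⟨a, Nat.lt_of_succ_lt ha1m⟩ : Fin m)
            = J ⟨n - 1, Nat.sub_lt h Nat.one_pos⟩ := Fin.ext rfl
        rw [e1] at goal2
        exact goal2.symm
  · -- claim 3
    intro hn
    have nons : ∀ (j : Fin m), ¬ rel s (χ (e j)) := by
      intro j hr
      obtain ⟨i, _⟩ := (hJrange j).mp hr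
      exact absurd i.isLt (by omega)
    have hm1 : m - 1 < m := Nat.sub_lt hm Nat.one_pos
    have hch := chain 0 (m - 1) (Nat.zero_le _) hm1
      (fun j _ hj2 => nons ⟨j, lt_trans hj2 hm1⟩)
    exact hch.trans (edge_pi ⟨m - 1, hm1⟩ (nons _))
  · -- claim 4
    intro i
    have hcomp : Quotient.mk (Tpc D χ rel π (χ (e (J i)))).compSetoid
        (Quotient.mk (omegaSetoid rel π (χ (e (J i)))) (D.src (e (J i))))
        = Quotient.mk (Tpc D χ rel π (χ (e (J i)))).compSetoid
        (Quotient.mk (omegaSetoid rel π (χ (e (J i)))) (D.tgt (e (J i)))) := by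
      apply Quotient.sound
      exact Relation.EqvGen.rel _ _ ⟨⟨e (J i), rfl⟩, rfl, rfl⟩
    refine ⟨hcomp, fun hcol => ⟨?_, rfl, rfl⟩⟩
    show Sum.inr _ = Sum.inr _
    exact congrArg _ (Sigma.ext rfl (heq_of_eq hcomp))

end GraphPaper
end

section
/- Let T be a finite directed multigraph with edge coloring χ : E(T) → 𝒞 and let π = (π_s)_{s∈𝒮} be a family of partitions of V(T) with π_t ≥ ρ_t for all t ∈ 𝒮. Fix s ∈ 𝒮 and c ∈ 𝒞_s, and suppose that GCC(T,π,s) is a tree (a connected graph with no cycles and no parallel edges). Then the map h_{s,c} : V(T_{π,c}) → V(𝒢_{π,s}) is injective on each weakly connected component of T_{π,c}. -/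
open Filter MeasureTheory Matrix
open scoped BigOperators Classical

namespace GraphPaper

/-- If an edge `e₀` has a parallel companion `e₁ ≠ e₀` with the same source and target,
then `e₀` is not a cut edge: removing it does not change the component setoid. -/
lemma not_isCutEdge_of_parallel {V E : Type*} (D : Digr V E) {e₀ e₁ : E} (hne : e₁ ≠ e₀)
    (hs : D.src e₀ = D.src e₁) (ht : D.tgt e₀ = D.tgt e₁) : ¬ D.IsCutEdge e₀ := by
  have hset : (D.erase e₀).compSetoid = D.compSetoid := by
    apply Setoid.ext
    intro a b
    constructor
    · intro hab
      induction hab with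
      | rel a b h' =>
        obtain ⟨e, he1, he2⟩ := h'
        exact Relation.EqvGen.rel a b ⟨e.1, he1, he2⟩
      | refl a => exact Relation.EqvGen.refl a
      | symm a b _ ih => exact Relation.EqvGen.symm a b ih
      | trans a b c _ _ ih1 ih2 => exact Relation.EqvGen.trans a b c ih1 ih2
    · intro hab
      induction hab with
      | rel a b h' =>
        obtain ⟨e, he1, he2⟩ := h'
        by_cases he : e = e₀
        · subst he
          refine Relation.EqvGen.rel a b ⟨⟨e₁, hne⟩, ?_, ?_⟩
          · rw [← he1]; exact hs.symm
          · rw [← he2]; exact ht.symm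
        · exact Relation.EqvGen.rel a b ⟨⟨e, he⟩, he1, he2⟩
      | refl a => exact Relation.EqvGen.refl a
      | symm a b _ ih => exact Relation.EqvGen.symm a b ih
      | trans a b c _ _ ih1 ih2 => exact Relation.EqvGen.trans a b c ih1 ih2
  intro h
  have : D.ncomp < (D.erase e₀).ncomp := h
  unfold Digr.ncomp Digr.Components at this
  rw [hset] at this
  exact lt_irrefl _ this

/-- **Lemma (if `GCC(T,π,s)` is a tree then `h_{s,c}` is injective on each component of
`T_{π,c}`).** -/
theorem statement13 {C S V E : Type} [Fintype C] [Fintype S] [Fintype V] [Fintype E]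
    (rel : S → C → Prop)
    (D : Digr V E) (χ : E → C)
    (π : S → Setoid V) (hρ : ∀ t : S, rhoSetoid D χ rel t ≤ π t)
    (s : S) (c : C) (hc : rel s c)
    (htree : (GCC D χ rel π s).IsTree) :
    ∀ v w : Quotient (omegaSetoid rel π c),
      (Tpc D χ rel π c).compSetoid v w →
      hmap rel π hc v = hmap rel π hc w → v = w := by
  intro v w hcomp hmapeq
  by_contra hne
  set G := GCC D χ rel π s
  set e₀ : GCCEdge rel π s := ⟨⟨c, hc⟩, v⟩ with he₀
  set e₁ : GCCEdge rel π s := ⟨⟨c, hc⟩, w⟩ with he₁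
  have hne' : e₁ ≠ e₀ := by
    intro h
    apply hne
    have := (Sigma.mk.inj_iff.mp h).2
    exact (eq_of_heq this).symm
  have hs : G.src e₀ = G.src e₁ := by
    show (Sum.inr ⟨⟨c, hc⟩, Quotient.mk (Tpc D χ rel π c).compSetoid v⟩ :
        GCCVert D χ rel π s) =
      Sum.inr ⟨⟨c, hc⟩, Quotient.mk (Tpc D χ rel π c).compSetoid w⟩
    rw [Quotient.sound hcomp]
  have ht : G.tgt e₀ = G.tgt e₁ := by
    show (Sum.inl (hmap rel π hc v) : GCCVert D χ rel π s) = Sum.inl (hmap rel π hc w)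
    rw [hmapeq]
  exact not_isCutEdge_of_parallel G hne' hs ht (htree.2 e₀)

end GraphPaper
end
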